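/- Let Ω ∈ H with (E 0) Ω = Ω, let κ ∈ ℝ, and let M₋, M₊ be von Neumann algebras on H such that every element of M₋ commutes with every element of M₊, and V(t) M₋ V(t)* = M₋ and V(t) M₊ V(t)* = M₊ for all t ∈ ℝ. Assume Ω ⊗ Ω is cyclic both for the von Neumann algebra generated by {x ⊗ 1 : x ∈ M₋} ∪ {1 ⊗ y : y ∈ M₊} and for the von Neumann algebra generated by {x ⊗ 1 : x ∈ M₊} ∪ {1 ⊗ y : y ∈ M₋}. Then every element of the von Neumann algebra M_κ generated by {x ⊗ 1 : x ∈ M₋} ∪ {U_κ (1 ⊗ y) U_κ* : y ∈ M₊} commutes with every element of the von Neumann algebra M¹_κ generated by {U_κ (x ⊗ 1) U_κ* : x ∈ M₊} ∪ {1 ⊗ y : y ∈ M₋}, and Ω ⊗ Ω is cyclic and separating for M_κ. -/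

import Mathlib

noncomputable section

/-- The completed Hilbert space tensor product of two complex Hilbert spaces,
realized abstractly: a Hilbert space `HT` together with a continuous bilinear
map `tmul` whose elementary tensors have dense span and multiply inner
products, and the induced operator `map a b = a ⊗ b` on `HT`, determined by
`(a ⊗ b)(ξ ⊗ η) = (a ξ) ⊗ (b η)`. -/
structure HilbertTensor (H₁ H₂ HT : Type*)
    [NormedAddCommGroup H₁] [InnerProductSpace ℂ H₁] [CompleteSpace H₁]
    [NormedAddCommGroup H₂] [InnerProductSpace ℂ H₂] [CompleteSpace H₂]
    [NormedAddCommGroup HT] [InnerProductSpace ℂ HT] [CompleteSpace HT] :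
    Type _ where
  tmul : H₁ →L[ℂ] H₂ →L[ℂ] HT
  inner_tmul : ∀ (ξ ξ' : H₁) (η η' : H₂),
    (inner ℂ (tmul ξ η) (tmul ξ' η') : ℂ) = (inner ℂ ξ ξ' : ℂ) * (inner ℂ η η' : ℂ)
  dense_span : Dense (↑(Submodule.span ℂ {z : HT | ∃ ξ η, z = tmul ξ η}) : Set HT)
  map : (H₁ →L[ℂ] H₁) → (H₂ →L[ℂ] H₂) → (HT →L[ℂ] HT)
  map_tmul : ∀ (a : H₁ →L[ℂ] H₁) (b : H₂ →L[ℂ] H₂) (ξ : H₁) (η : H₂),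
    map a b (tmul ξ η) = tmul (a ξ) (b η)

/-- The von Neumann algebra generated by a set of operators: its double commutant. -/
def genVN {M : Type*} [Mul M] (S : Set M) : Set M :=
  Set.centralizer (Set.centralizer S)

/-- `adExp a z = e^{a} z e^{-a}`, i.e. `Ad(e^a)(z)`. -/
def adExp {A : Type*} [NormedRing A] [NormedAlgebra ℂ A] [CompleteSpace A]
    (a z : A) : A :=
  NormedSpace.exp a * z * NormedSpace.exp (-a)

/-!
On tensors whose right leg lies in the spectral subspace `range (E n)`, `U` acts as
`V (κ n) ⊗ 1`, and symmetrically on left legs. Hence `U (x ⊗ 1) U*` acts there as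
`(V (κ n) x V (κ n)*) ⊗ 1` with `V (κ n) x V (κ n)* ∈ M₊`, which commutes with `M₋ ⊗ 1`; so the
generators of `M_κ` and `M¹_κ` commute, and therefore so do the algebras. Since `Ω ∈ range (E 0)`,
`U` fixes `Ω ⊗ η` and `ξ ⊗ Ω`, so `(x ⊗ 1) U (1 ⊗ y) U* (Ω ⊗ Ω) = xΩ ⊗ yΩ`. Cyclicity of `Ω ⊗ Ω`
for the untwisted algebras says that these product vectors have dense span (the projection onto
their closed span commutes with the generators), so `Ω ⊗ Ω` is cyclic for `M_κ` and, in the same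
way, for `M¹_κ ⊆ M_κ'`, which makes it separating for `M_κ`.
-/

open ContinuousLinearMap Module.End

lemma mul_comm_of_mem_genVN {M : Type*} [Mul M] {S T : Set M}
    (h : ∀ s ∈ S, ∀ t ∈ T, s * t = t * s) :
    ∀ z ∈ genVN S, ∀ w ∈ genVN T, z * w = w * z := by
  have hT : T ⊆ Set.centralizer S := fun t ht s hs => h s hs t ht
  have hS : genVN S ⊆ Set.centralizer (genVN T) := by
    rw [genVN, genVN, Set.centralizer_centralizer_centralizer]
    exact Set.centralizer_subset hT
  exact fun z hz w hw => (hS hz w hw).symm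

lemma mul_mem_genVN {M : Type*} [Semigroup M] {S : Set M} {a b : M} (ha : a ∈ S) (hb : b ∈ S) :
    a * b ∈ genVN S :=
  Set.mul_mem_centralizer (Set.subset_centralizer_centralizer ha)
    (Set.subset_centralizer_centralizer hb)

section

variable {𝕜 E : Type*} [NontriviallyNormedField 𝕜] [NormedAddCommGroup E] [NormedSpace 𝕜 E]

lemma dense_image_genVN_of_dense_span {S : Set (E →L[𝕜] E)} {Φ : E} {G : Set E}
    (hG : Dense (Submodule.span 𝕜 G : Set E))
    (hGS : G ⊆ (fun z : E →L[𝕜] E => z Φ) '' genVN S) :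
    Dense ((fun z : E →L[𝕜] E => z Φ) '' genVN S) := by
  let N : Submodule 𝕜 E :=
    (Subalgebra.centralizer 𝕜 (Set.centralizer S)).toSubmodule.map (apply 𝕜 E Φ).toLinearMap
  have hN : (fun z : E →L[𝕜] E => z Φ) '' genVN S = N := by
    simp only [N, genVN, Submodule.map_coe, Subalgebra.coe_toSubmodule,
      Subalgebra.coe_centralizer]
    rfl
  rw [hN] at hGS ⊢
  exact hG.mono (Submodule.span_le.2 hGS)

lemma eq_zero_of_dense_image_of_commute {T : Set (E →L[𝕜] E)} {Φ : E}
    (hT : Dense ((fun w : E →L[𝕜] E => w Φ) '' T)) {z : E →L[𝕜] E}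
    (hz : ∀ w ∈ T, z * w = w * z) (hzΦ : z Φ = 0) : z = 0 := by
  have hvanish : Set.EqOn z 0 ((fun w : E →L[𝕜] E => w Φ) '' T) := by
    rintro _ ⟨w, hw, rfl⟩
    change (z * w) Φ = 0
    rw [hz w hw, mul_apply_eq_comp, hzΦ, map_zero]
  exact DFunLike.coe_injective (Continuous.ext_on hT z.continuous continuous_zero hvanish)

end

section

variable {𝕜 E : Type*} [RCLike 𝕜] [NormedAddCommGroup E] [InnerProductSpace 𝕜 E] [CompleteSpace E]

lemma Submodule.commute_starProjection {K : Submodule 𝕜 E} [K.HasOrthogonalProjection]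
    {T : E →L[𝕜] E} (hT : K ∈ invtSubmodule T) (hT' : K ∈ invtSubmodule (adjoint T)) :
    Commute K.starProjection T :=
  K.isIdempotentElem_starProjection.commute_iff.2
    ⟨by rwa [Submodule.range_starProjection],
      by rw [Submodule.ker_starProjection]; exact orthogonal_mem_invtSubmodule hT'⟩

lemma apply_mem_of_mem_genVN {S : Set (E →L[𝕜] E)} (hS : ∀ s ∈ S, adjoint s ∈ S)
    {K : Submodule 𝕜 E} [K.HasOrthogonalProjection] (hK : ∀ s ∈ S, K ∈ invtSubmodule s)
    {z : E →L[𝕜] E} (hz : z ∈ genVN S) {Φ : E} (hΦ : Φ ∈ K) : z Φ ∈ K := by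
  have hp : K.starProjection ∈ Set.centralizer S := fun s hs =>
    (K.commute_starProjection (hK s hs) (hK _ (hS s hs))).eq.symm
  rw [← K.starProjection_eq_self_iff.2 hΦ, ← mul_apply_eq_comp z, ← hz _ hp, mul_apply_eq_comp]
  exact K.starProjection_apply_mem _

lemma dense_span_of_dense_image_genVN {S : Set (E →L[𝕜] E)} (hS : ∀ s ∈ S, adjoint s ∈ S)
    {G : Set E} (hG : ∀ s ∈ S, Set.MapsTo s G G) {Φ : E} (hΦ : Φ ∈ G)
    (hcyc : Dense ((fun z : E →L[𝕜] E => z Φ) '' genVN S)) :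
    Dense (Submodule.span 𝕜 G : Set E) := by
  set K := (Submodule.span 𝕜 G).topologicalClosure
  have hK : ∀ s ∈ S, K ∈ invtSubmodule s := fun s hs =>
    Submodule.topologicalClosure_mem_invtSubmodule <| by
      rw [mem_invtSubmodule, Submodule.span_le]
      exact fun v hv => Submodule.subset_span (hG s hs hv)
  have hsub : (fun z : E →L[𝕜] E => z Φ) '' genVN S ⊆ K := by
    rintro _ ⟨z, hz, rfl⟩
    exact apply_mem_of_mem_genVN hS hK hz
      ((Submodule.span 𝕜 G).le_topologicalClosure (Submodule.subset_span hΦ))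
  rw [← dense_closure, ← Submodule.topologicalClosure_coe]
  exact hcyc.mono hsub

lemma ContinuousLinearMap.eq_adjoint_of_dense_span {F : Type*} [NormedAddCommGroup F]
    [InnerProductSpace 𝕜 F] [CompleteSpace F] {s : Set E} {t : Set F}
    (hs : Dense (Submodule.span 𝕜 s : Set E)) (ht : Dense (Submodule.span 𝕜 t : Set F))
    {A : F →L[𝕜] E} {B : E →L[𝕜] F} (h : ∀ y ∈ t, ∀ x ∈ s, inner 𝕜 (A y) x = inner 𝕜 y (B x)) :
    A = adjoint B := by
  refine ext_on ht fun y hy => ext_inner_right 𝕜 fun x => ?_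
  have : innerSL 𝕜 (A y) = innerSL 𝕜 (adjoint B y) :=
    ext_on hs fun x hx => by simp only [innerSL_apply_apply, adjoint_inner_left, h y hy x hx]
  exact congr($this x)

end

lemma ContinuousLinearMap.ext_of_hasSum {R M F ι : Type*} [Semiring R] [AddCommMonoid M]
    [TopologicalSpace M] [Module R M] [AddCommMonoid F] [TopologicalSpace F] [Module R F]
    [T2Space F] {E : ι → M →L[R] M} (hE : ∀ ξ, HasSum (fun n => E n ξ) ξ) {f g : M →L[R] F}
    (h : ∀ n, f ∘L E n = g ∘L E n) : f = g :=
  ext fun ξ => ((f.hasSum (hE ξ)).unique (by simpa only [← comp_apply, h] using g.hasSum (hE ξ)))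

namespace HilbertTensor

variable {H₁ H₂ HT : Type*}
    [NormedAddCommGroup H₁] [InnerProductSpace ℂ H₁] [CompleteSpace H₁]
    [NormedAddCommGroup H₂] [InnerProductSpace ℂ H₂] [CompleteSpace H₂]
    [NormedAddCommGroup HT] [InnerProductSpace ℂ HT] [CompleteSpace HT]
    (P : HilbertTensor H₁ H₂ HT)

def swap : HilbertTensor H₂ H₁ HT where
  tmul := P.tmul.flip
  inner_tmul η η' ξ ξ' := by simp only [flip_apply, P.inner_tmul, mul_comm]
  dense_span := by
    convert P.dense_span using 5
    exact ⟨fun ⟨η, ξ, h⟩ => ⟨ξ, η, h⟩, fun ⟨ξ, η, h⟩ => ⟨η, ξ, h⟩⟩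
  map a b := P.map b a
  map_tmul a b η ξ := P.map_tmul b a ξ η

@[simp] lemma swap_tmul (η : H₂) (ξ : H₁) : P.swap.tmul η ξ = P.tmul ξ η := rfl

@[simp] lemma swap_map (b : H₂ →L[ℂ] H₂) (a : H₁ →L[ℂ] H₁) : P.swap.map b a = P.map a b := rfl

lemma ext_tmul {F : Type*} [NormedAddCommGroup F] [NormedSpace ℂ F] {f g : HT →L[ℂ] F}
    (h : ∀ ξ η, f (P.tmul ξ η) = g (P.tmul ξ η)) : f = g :=
  ext_on P.dense_span <| by rintro _ ⟨ξ, η, rfl⟩; exact h ξ η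

lemma ext_tmul_flip {F ι : Type*} [NormedAddCommGroup F] [NormedSpace ℂ F]
    {E : ι → H₂ →L[ℂ] H₂} (hE : ∀ η, HasSum (fun n => E n η) η) {f g : HT →L[ℂ] F}
    (h : ∀ n, ∀ η ∈ Set.range (E n), f ∘L P.tmul.flip η = g ∘L P.tmul.flip η) : f = g := by
  refine P.ext_tmul fun ξ η => ?_
  have : f ∘L P.tmul ξ = g ∘L P.tmul ξ := ext_of_hasSum hE fun n => ext fun η =>
    congr($(h n _ ⟨η, rfl⟩) ξ)
  exact congr($this η)

lemma commute_map_one (a : H₁ →L[ℂ] H₁) (b : H₂ →L[ℂ] H₂) :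
    Commute (P.map a 1) (P.map 1 b) :=
  P.ext_tmul fun ξ η => by simp only [mul_apply_eq_comp, map_tmul, one_apply_eq_self]

lemma map_one_comp_tmul_flip (a : H₁ →L[ℂ] H₁) (η : H₂) :
    P.map a 1 ∘L P.tmul.flip η = P.tmul.flip η ∘L a :=
  ext fun ξ => by simp only [comp_apply, flip_apply, map_tmul, one_apply_eq_self]

lemma adjoint_map (a : H₁ →L[ℂ] H₁) (b : H₂ →L[ℂ] H₂) :
    adjoint (P.map a b) = P.map (adjoint a) (adjoint b) := by
  refine (eq_adjoint_of_dense_span P.dense_span P.dense_span ?_).symm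
  rintro _ ⟨ξ', η', rfl⟩ _ ⟨ξ, η, rfl⟩
  simp only [map_tmul, inner_tmul, adjoint_inner_left]

lemma comp_tmul_flip_eq_of_eigen {ι : Type*} {E : ι → H₁ →L[ℂ] H₁}
    (hE : ∀ ξ, HasSum (fun n => E n ξ) ξ) {U : HT →L[ℂ] HT} {W : H₁ →L[ℂ] H₁} {c : ι → ℂ}
    {η : H₂} (hU : ∀ m, ∀ ξ ∈ Set.range (E m), U (P.tmul ξ η) = c m • P.tmul ξ η)
    (hW : ∀ m, ∀ ξ ∈ Set.range (E m), W ξ = c m • ξ) :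
    U ∘L P.tmul.flip η = P.tmul.flip η ∘L W :=
  ext_of_hasSum hE fun m => ext fun ξ => by
    simp only [comp_apply, flip_apply, hU m _ ⟨ξ, rfl⟩, hW m _ ⟨ξ, rfl⟩, map_smul]

lemma conj_map_one_comp_tmul_flip {U : HT →L[ℂ] HT} (hU : U ∈ unitary (HT →L[ℂ] HT))
    {W : H₁ →L[ℂ] H₁} (hW : W ∈ unitary (H₁ →L[ℂ] H₁)) {η : H₂}
    (hUW : U ∘L P.tmul.flip η = P.tmul.flip η ∘L W) (b : H₁ →L[ℂ] H₁) :
    (U * P.map b 1 * star U) ∘L P.tmul.flip η = P.tmul.flip η ∘L (W * b * star W) := by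
  have hstar : star U ∘L P.tmul.flip η = P.tmul.flip η ∘L star W := calc
    star U ∘L P.tmul.flip η = star U ∘L (P.tmul.flip η ∘L W) ∘L star W := by
      rw [comp_assoc, ← mul_def, Unitary.mul_star_self_of_mem hW, one_def, comp_id]
    _ = P.tmul.flip η ∘L star W := by
      rw [← hUW, ← comp_assoc, ← comp_assoc, ← mul_def, Unitary.star_mul_self_of_mem hU,
        one_def, id_comp]
  calc (U * P.map b 1 * star U) ∘L P.tmul.flip η = U ∘L P.map b 1 ∘L star U ∘L P.tmul.flip η := rfl
    _ = P.tmul.flip η ∘L (W * b * star W) := by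
      rw [hstar, ← comp_assoc (P.map b 1), map_one_comp_tmul_flip, ← comp_assoc U, ← comp_assoc U,
        hUW]
      rfl

lemma conj_map_one_apply_tmul {U : HT →L[ℂ] HT} (hU : U ∈ unitary (HT →L[ℂ] HT)) {η : H₂}
    (hUη : U ∘L P.tmul.flip η = P.tmul.flip η) (a : H₁ →L[ℂ] H₁) (ξ : H₁) :
    (U * P.map a 1 * star U) (P.tmul ξ η) = P.tmul (a ξ) η := by
  simpa using congr($(P.conj_map_one_comp_tmul_flip hU (one_mem _) (by rwa [one_def, comp_id]) a) ξ)

lemma commute_map_one_conj {ι : Type*} {E : ι → H₂ →L[ℂ] H₂}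
    (hE : ∀ η, HasSum (fun n => E n η) η) {U : HT →L[ℂ] HT} (hU : U ∈ unitary (HT →L[ℂ] HT))
    {W : ι → H₁ →L[ℂ] H₁} (hW : ∀ n, W n ∈ unitary (H₁ →L[ℂ] H₁))
    (hUW : ∀ n, ∀ η ∈ Set.range (E n), U ∘L P.tmul.flip η = P.tmul.flip η ∘L W n)
    {a b : H₁ →L[ℂ] H₁} (hab : ∀ n, Commute a (W n * b * star (W n))) :
    Commute (P.map a 1) (U * P.map b 1 * star U) := by
  refine P.ext_tmul_flip hE fun n η hη => ?_
  have hconj := P.conj_map_one_comp_tmul_flip hU (hW n) (hUW n η hη) b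
  calc (P.map a 1 * (U * P.map b 1 * star U)) ∘L P.tmul.flip η
      = P.map a 1 ∘L (U * P.map b 1 * star U) ∘L P.tmul.flip η := rfl
    _ = P.tmul.flip η ∘L (a * (W n * b * star (W n))) := by
      rw [hconj, ← comp_assoc, map_one_comp_tmul_flip]; rfl
    _ = P.tmul.flip η ∘L ((W n * b * star (W n)) * a) := by rw [(hab n).eq]
    _ = (U * P.map b 1 * star U * P.map a 1) ∘L P.tmul.flip η := by
      rw [mul_def _ (P.map a 1), comp_assoc, map_one_comp_tmul_flip, ← comp_assoc, hconj]; rfl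

lemma dense_span_tmul_of_dense_image_genVN (N₁ : StarSubalgebra ℂ (H₁ →L[ℂ] H₁))
    (N₂ : StarSubalgebra ℂ (H₂ →L[ℂ] H₂)) {ξ₀ : H₁} {η₀ : H₂}
    (hcyc : Dense ((fun z : HT →L[ℂ] HT => z (P.tmul ξ₀ η₀)) ''
      genVN ((fun x : H₁ →L[ℂ] H₁ => P.map x 1) '' (N₁ : Set (H₁ →L[ℂ] H₁)) ∪
             (fun y : H₂ →L[ℂ] H₂ => P.map 1 y) '' (N₂ : Set (H₂ →L[ℂ] H₂))))) :
    Dense (Submodule.span ℂ {z | ∃ x ∈ N₁, ∃ y ∈ N₂, z = P.tmul (x ξ₀) (y η₀)} : Set HT) := by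
  refine dense_span_of_dense_image_genVN ?_ ?_ ⟨1, one_mem _, 1, one_mem _, rfl⟩ hcyc
  · rintro _ (⟨x, hx, rfl⟩ | ⟨y, hy, rfl⟩)
    · exact .inl ⟨star x, star_mem hx, by rw [adjoint_map, ← star_eq_adjoint, ← star_eq_adjoint,
        star_one]⟩
    · exact .inr ⟨star y, star_mem hy, by rw [adjoint_map, ← star_eq_adjoint, ← star_eq_adjoint,
        star_one]⟩
  · rintro _ (⟨x', hx', rfl⟩ | ⟨y', hy', rfl⟩) _ ⟨x, hx, y, hy, rfl⟩
    · exact ⟨x' * x, mul_mem hx' hx, y, hy, by simp only [map_tmul, one_apply_eq_self]; rfl⟩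
    · exact ⟨x, hx, y' * y, mul_mem hy' hy, by simp only [map_tmul, one_apply_eq_self]; rfl⟩

lemma dense_image_genVN_of_tmul_mem (N₁ : StarSubalgebra ℂ (H₁ →L[ℂ] H₁))
    (N₂ : StarSubalgebra ℂ (H₂ →L[ℂ] H₂)) {ξ₀ : H₁} {η₀ : H₂}
    (hcyc : Dense ((fun z : HT →L[ℂ] HT => z (P.tmul ξ₀ η₀)) ''
      genVN ((fun x : H₁ →L[ℂ] H₁ => P.map x 1) '' (N₁ : Set (H₁ →L[ℂ] H₁)) ∪
             (fun y : H₂ →L[ℂ] H₂ => P.map 1 y) '' (N₂ : Set (H₂ →L[ℂ] H₂)))))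
    {S : Set (HT →L[ℂ] HT)}
    (hS : ∀ x ∈ N₁, ∀ y ∈ N₂, ∃ z ∈ genVN S, z (P.tmul ξ₀ η₀) = P.tmul (x ξ₀) (y η₀)) :
    Dense ((fun z : HT →L[ℂ] HT => z (P.tmul ξ₀ η₀)) '' genVN S) := by
  refine dense_image_genVN_of_dense_span (P.dense_span_tmul_of_dense_image_genVN N₁ N₂ hcyc) ?_
  rintro _ ⟨x, hx, y, hy, rfl⟩
  exact hS x hx y hy

/-- `U` is the paper's `U_κ` for the gradings `E₁` of `H₁` and `E₂` of `H₂`. -/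
def IsTwist (E₁ : ℤ → H₁ →L[ℂ] H₁) (E₂ : ℤ → H₂ →L[ℂ] H₂) (κ : ℝ) (U : HT →L[ℂ] HT) : Prop :=
  ∀ (m n : ℤ) (ξ : H₁) (η : H₂), ξ ∈ Set.range (E₁ m) → η ∈ Set.range (E₂ n) →
    U (P.tmul ξ η) = Complex.exp (Complex.I * κ * m * n) • P.tmul ξ η

variable {P} {E₁ : ℤ → H₁ →L[ℂ] H₁} {E₂ : ℤ → H₂ →L[ℂ] H₂} {κ : ℝ} {U : HT →L[ℂ] HT}

lemma IsTwist.swap (hU : P.IsTwist E₁ E₂ κ U) : P.swap.IsTwist E₂ E₁ κ U :=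
  fun n m η ξ hη hξ => by rw [swap_tmul, hU m n ξ η hξ hη, mul_right_comm]

lemma IsTwist.comp_tmul_flip (hU : P.IsTwist E₁ E₂ κ U)
    (hE₁ : ∀ ξ, HasSum (fun n => E₁ n ξ) ξ) {V : ℝ → H₁ →L[ℂ] H₁}
    (hV : ∀ (t : ℝ) (n : ℤ) (ξ : H₁), ξ ∈ Set.range (E₁ n) →
      V t ξ = Complex.exp (Complex.I * n * t) • ξ)
    {n : ℤ} {η : H₂} (hη : η ∈ Set.range (E₂ n)) :
    U ∘L P.tmul.flip η = P.tmul.flip η ∘L V (κ * n) :=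
  P.comp_tmul_flip_eq_of_eigen hE₁ (fun m ξ hξ => hU m n ξ η hξ hη)
    fun m ξ hξ => by rw [hV _ m ξ hξ]; congr 2; push_cast; ring

lemma IsTwist.comp_tmul_flip_of_mem_range_zero (hU : P.IsTwist E₁ E₂ κ U)
    (hE₁ : ∀ ξ, HasSum (fun n => E₁ n ξ) ξ) {η : H₂} (hη : η ∈ Set.range (E₂ 0)) :
    U ∘L P.tmul.flip η = P.tmul.flip η :=
  (P.comp_tmul_flip_eq_of_eigen hE₁ (W := 1) (c := fun _ => 1)
    (fun m ξ hξ => by simpa using hU m 0 ξ η hξ hη) fun _ _ _ => (one_smul _ _).symm).trans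
    (comp_id _)

end HilbertTensor

lemma HilbertTensor.IsTwist.mul_comm_generators {H HT : Type*}
    [NormedAddCommGroup H] [InnerProductSpace ℂ H] [CompleteSpace H]
    [NormedAddCommGroup HT] [InnerProductSpace ℂ HT] [CompleteSpace HT]
    {P : HilbertTensor H H HT} {E : ℤ → H →L[ℂ] H} {κ : ℝ} {U : HT →L[ℂ] HT}
    (hU : P.IsTwist E E κ U) (hU_unitary : U ∈ unitary (HT →L[ℂ] HT))
    (hE : ∀ ξ, HasSum (fun n => E n ξ) ξ) {V : ℝ → H →L[ℂ] H}
    (hV_unitary : ∀ t, V t ∈ unitary (H →L[ℂ] H))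
    (hV : ∀ (t : ℝ) (n : ℤ) (ξ : H), ξ ∈ Set.range (E n) →
      V t ξ = Complex.exp (Complex.I * n * t) • ξ)
    {N₁ N₂ : Set (H →L[ℂ] H)} (hN : ∀ x ∈ N₁, ∀ y ∈ N₂, x * y = y * x)
    (hN₂ : ∀ t, ∀ y ∈ N₂, V t * y * star (V t) ∈ N₂) :
    ∀ s ∈ (fun x => P.map x 1) '' N₁ ∪ (fun y => U * P.map 1 y * star U) '' N₂,
    ∀ t ∈ (fun x => U * P.map x 1 * star U) '' N₂ ∪ (fun y => P.map 1 y) '' N₁,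
      s * t = t * s := by
  rintro _ (⟨x, hx, rfl⟩ | ⟨y, hy, rfl⟩) _ (⟨x', hx', rfl⟩ | ⟨y', hy', rfl⟩)
  · exact P.commute_map_one_conj hE hU_unitary (fun _ => hV_unitary _)
      (fun _ _ => hU.comp_tmul_flip hE hV) fun n => hN x hx _ (hN₂ _ x' hx')
  · exact P.commute_map_one x y'
  · exact (P.commute_map_one x' y).symm.map (Unitary.conjStarAlgAut ℂ _ ⟨U, hU_unitary⟩)
  · exact (P.swap.commute_map_one_conj hE hU_unitary (fun _ => hV_unitary _)
      (fun _ _ => hU.swap.comp_tmul_flip hE hV) fun n => hN y' hy' _ (hN₂ _ y hy)).symm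

theorem stmt16_general
    {H HT : Type*}
    [NormedAddCommGroup H] [InnerProductSpace ℂ H] [CompleteSpace H]
    [NormedAddCommGroup HT] [InnerProductSpace ℂ HT] [CompleteSpace HT]
    (P : HilbertTensor H H HT)
    (E : ℤ → (H →L[ℂ] H))
    (hE_sum : ∀ ξ : H, HasSum (fun n => E n ξ) ξ)
    (V : ℝ → (H →L[ℂ] H))
    (hV_unitary : ∀ t, V t ∈ unitary (H →L[ℂ] H))
    (hV_eig : ∀ (t : ℝ) (n : ℤ) (ξ : H), ξ ∈ Set.range ⇑(E n) →
      V t ξ = Complex.exp (Complex.I * (n : ℂ) * (t : ℂ)) • ξ)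
    (κ : ℝ) (U : HT →L[ℂ] HT)
    (hU_unitary : U ∈ unitary (HT →L[ℂ] HT))
    (hU_eig : ∀ (m n : ℤ) (ξ η : H), ξ ∈ Set.range ⇑(E m) → η ∈ Set.range ⇑(E n) →
      U (P.tmul ξ η) = Complex.exp (Complex.I * (κ : ℂ) * (m : ℂ) * (n : ℂ)) • P.tmul ξ η)
    (Ω : H) (hΩ : E 0 Ω = Ω)
    (Mm Mp : VonNeumannAlgebra H)
    (hMcomm : ∀ x ∈ Mm, ∀ y ∈ Mp, x * y = y * x)
    (hMp_inv : ∀ t : ℝ, (fun x : H →L[ℂ] H => V t * x * star (V t)) ''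
      (Mp : Set (H →L[ℂ] H)) = (Mp : Set (H →L[ℂ] H)))
    (hcyc₁ : Dense ((fun z : HT →L[ℂ] HT => z (P.tmul Ω Ω)) ''
      genVN ((fun x : H →L[ℂ] H => P.map x 1) '' (Mm : Set (H →L[ℂ] H)) ∪
             (fun y : H →L[ℂ] H => P.map 1 y) '' (Mp : Set (H →L[ℂ] H)))))
    (hcyc₂ : Dense ((fun z : HT →L[ℂ] HT => z (P.tmul Ω Ω)) ''
      genVN ((fun x : H →L[ℂ] H => P.map x 1) '' (Mp : Set (H →L[ℂ] H)) ∪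
             (fun y : H →L[ℂ] H => P.map 1 y) '' (Mm : Set (H →L[ℂ] H))))) :
    (∀ z ∈ genVN ((fun x : H →L[ℂ] H => P.map x 1) '' (Mm : Set (H →L[ℂ] H)) ∪
        (fun y : H →L[ℂ] H => U * P.map 1 y * star U) '' (Mp : Set (H →L[ℂ] H))),
      ∀ w ∈ genVN ((fun x : H →L[ℂ] H => U * P.map x 1 * star U) ''
          (Mp : Set (H →L[ℂ] H)) ∪
        (fun y : H →L[ℂ] H => P.map 1 y) '' (Mm : Set (H →L[ℂ] H))),
        z * w = w * z) ∧
    Dense ((fun z : HT →L[ℂ] HT => z (P.tmul Ω Ω)) ''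
      genVN ((fun x : H →L[ℂ] H => P.map x 1) '' (Mm : Set (H →L[ℂ] H)) ∪
        (fun y : H →L[ℂ] H => U * P.map 1 y * star U) '' (Mp : Set (H →L[ℂ] H)))) ∧
    (∀ z ∈ genVN ((fun x : H →L[ℂ] H => P.map x 1) '' (Mm : Set (H →L[ℂ] H)) ∪
        (fun y : H →L[ℂ] H => U * P.map 1 y * star U) '' (Mp : Set (H →L[ℂ] H))),
      z (P.tmul Ω Ω) = 0 → z = 0) := by
  have hU : P.IsTwist E E κ U := hU_eig
  have hcomm := mul_comm_of_mem_genVN <| hU.mul_comm_generators hU_unitary hE_sum hV_unitary hV_eig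
    hMcomm fun t x hx => (hMp_inv t).subset ⟨x, hx, rfl⟩
  refine ⟨hcomm, ?_, fun z hz hzΩ => ?_⟩
  · refine P.dense_image_genVN_of_tmul_mem Mm.toStarSubalgebra Mp.toStarSubalgebra hcyc₁
      fun x hx y hy => ⟨_, mul_mem_genVN (.inl ⟨x, hx, rfl⟩) (.inr ⟨y, hy, rfl⟩), ?_⟩
    have hUΩ : ∀ y, (U * P.map 1 y * star U) (P.tmul Ω Ω) = P.tmul Ω (y Ω) := fun y =>
      P.swap.conj_map_one_apply_tmul hU_unitary
        (hU.swap.comp_tmul_flip_of_mem_range_zero hE_sum ⟨Ω, hΩ⟩) y Ω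
    simp [mul_apply_eq_comp, hUΩ, P.map_tmul]
  · refine eq_zero_of_dense_image_of_commute ?_ (hcomm z hz) hzΩ
    refine P.dense_image_genVN_of_tmul_mem Mp.toStarSubalgebra Mm.toStarSubalgebra hcyc₂
      fun x hx y hy => ⟨_, mul_mem_genVN (.inr ⟨y, hy, rfl⟩) (.inl ⟨x, hx, rfl⟩), ?_⟩
    have hUΩ := hU.comp_tmul_flip_of_mem_range_zero hE_sum ⟨Ω, hΩ⟩
    simp [mul_apply_eq_comp, P.conj_map_one_apply_tmul hU_unitary hUΩ, P.map_tmul]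

/-- under mutual commutation of `M₋, M₊`, their `V`-invariance,
`(E 0)Ω = Ω` and the two cyclicity hypotheses, `M_κ` commutes with `M¹_κ` and
`Ω ⊗ Ω` is cyclic and separating for `M_κ`. -/
theorem stmt16
    {H HT : Type*}
    [NormedAddCommGroup H] [InnerProductSpace ℂ H] [CompleteSpace H]
    [NormedAddCommGroup HT] [InnerProductSpace ℂ HT] [CompleteSpace HT]
    (P : HilbertTensor H H HT)
    (E : ℤ → (H →L[ℂ] H))
    (hE_idem : ∀ n, IsIdempotentElem (E n))
    (hE_sa : ∀ n, IsSelfAdjoint (E n))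
    (hE_orth : ∀ m n, m ≠ n → E m * E n = 0)
    (hE_sum : ∀ ξ : H, HasSum (fun n => E n ξ) ξ)
    (V : ℝ → (H →L[ℂ] H))
    (hV_unitary : ∀ t, V t ∈ unitary (H →L[ℂ] H))
    (hV_eig : ∀ (t : ℝ) (n : ℤ) (ξ : H), ξ ∈ Set.range ⇑(E n) →
      V t ξ = Complex.exp (Complex.I * (n : ℂ) * (t : ℂ)) • ξ)
    (κ : ℝ) (U : HT →L[ℂ] HT)
    (hU_unitary : U ∈ unitary (HT →L[ℂ] HT))
    (hU_eig : ∀ (m n : ℤ) (ξ η : H), ξ ∈ Set.range ⇑(E m) → η ∈ Set.range ⇑(E n) →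
      U (P.tmul ξ η) = Complex.exp (Complex.I * (κ : ℂ) * (m : ℂ) * (n : ℂ)) • P.tmul ξ η)
    (Ω : H) (hΩ : E 0 Ω = Ω)
    (Mm Mp : VonNeumannAlgebra H)
    (hMcomm : ∀ x ∈ Mm, ∀ y ∈ Mp, x * y = y * x)
    (hMm_inv : ∀ t : ℝ, (fun x : H →L[ℂ] H => V t * x * star (V t)) ''
      (Mm : Set (H →L[ℂ] H)) = (Mm : Set (H →L[ℂ] H)))
    (hMp_inv : ∀ t : ℝ, (fun x : H →L[ℂ] H => V t * x * star (V t)) ''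
      (Mp : Set (H →L[ℂ] H)) = (Mp : Set (H →L[ℂ] H)))
    (hcyc₁ : Dense ((fun z : HT →L[ℂ] HT => z (P.tmul Ω Ω)) ''
      genVN ((fun x : H →L[ℂ] H => P.map x 1) '' (Mm : Set (H →L[ℂ] H)) ∪
             (fun y : H →L[ℂ] H => P.map 1 y) '' (Mp : Set (H →L[ℂ] H)))))
    (hcyc₂ : Dense ((fun z : HT →L[ℂ] HT => z (P.tmul Ω Ω)) ''
      genVN ((fun x : H →L[ℂ] H => P.map x 1) '' (Mp : Set (H →L[ℂ] H)) ∪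
             (fun y : H →L[ℂ] H => P.map 1 y) '' (Mm : Set (H →L[ℂ] H))))) :
    (∀ z ∈ genVN ((fun x : H →L[ℂ] H => P.map x 1) '' (Mm : Set (H →L[ℂ] H)) ∪
        (fun y : H →L[ℂ] H => U * P.map 1 y * star U) '' (Mp : Set (H →L[ℂ] H))),
      ∀ w ∈ genVN ((fun x : H →L[ℂ] H => U * P.map x 1 * star U) ''
          (Mp : Set (H →L[ℂ] H)) ∪
        (fun y : H →L[ℂ] H => P.map 1 y) '' (Mm : Set (H →L[ℂ] H))),
        z * w = w * z) ∧
    Dense ((fun z : HT →L[ℂ] HT => z (P.tmul Ω Ω)) ''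
      genVN ((fun x : H →L[ℂ] H => P.map x 1) '' (Mm : Set (H →L[ℂ] H)) ∪
        (fun y : H →L[ℂ] H => U * P.map 1 y * star U) '' (Mp : Set (H →L[ℂ] H)))) ∧
    (∀ z ∈ genVN ((fun x : H →L[ℂ] H => P.map x 1) '' (Mm : Set (H →L[ℂ] H)) ∪
        (fun y : H →L[ℂ] H => U * P.map 1 y * star U) '' (Mp : Set (H →L[ℂ] H))),
      z (P.tmul Ω Ω) = 0 → z = 0) :=
  stmt16_general P E hE_sum V hV_unitary hV_eig κ U hU_unitary hU_eig Ω hΩ Mm Mp hMcomm hMp_inv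
    hcyc₁ hcyc₂
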